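/- arXiv:2109.03025 — 4 statements merged into one kernel-verified Lean document; each statement's English description precedes it below -/
import Mathlib

section
/- Let G = (V, μ) be a 1-hypergraph of dimension d. Then for every subset X ⊆ V with |X| ≤ 1 there exists a (|X|, w_X(G))-simple 1-hypergraph S such that S ∈ Σ_ℤ(Eqs({G})). -/
/-- A hypergraph (of dimension `d`) over the data domain `ℕ`, represented by its
weight function: a finitely supported function from finite sets of data values
(potential hyperedges) to weight vectors in `ℤ^d`.  Isolated vertices are
irrelevant (hypergraphs are identified up to isolated vertices). -/
abbrev HG (d : ℕ) := (Finset ℕ) →₀ (Fin d → ℤ)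

/-- `H` is a `k`-hypergraph: every hyperedge (set with nonzero weight) has `k` elements. -/
def IsHG (k : ℕ) {d : ℕ} (H : HG d) : Prop := ∀ e ∈ H.support, e.card = k

/-- The (non-isolated) vertices of `H`: the union of its hyperedges. -/
def verts {d : ℕ} (H : HG d) : Finset ℕ := H.support.sup id

/-- The weight `w_X(H)` of a finite set `X`: the sum of the weights of all
hyperedges of `H` that contain `X`. -/
def weight {d : ℕ} (X : Finset ℕ) (H : HG d) : Fin d → ℤ :=
  ∑ e ∈ H.support.filter (fun e => X ⊆ e), H e
/-- Two hypergraphs are equivalent if (after discarding isolated vertices) they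
differ by a permutation of the data domain. -/
def HGEquiv {d : ℕ} (H₁ H₂ : HG d) : Prop :=
  ∃ π : ℕ ≃ ℕ, ∀ e : Finset ℕ, H₂ (e.image π) = H₁ e

/-- All hypergraphs equivalent to a member of the family `𝒢`. -/
def Eqs {d : ℕ} (𝒢 : Set (HG d)) : Set (HG d) := {H | ∃ G ∈ 𝒢, HGEquiv G H}

/-- `Σ_ℤ(𝒢)`: all finite `ℤ`-linear combinations of members of `𝒢`. -/
def Zsum {d : ℕ} (𝒢 : Set (HG d)) : Set (HG d) :=
  {H | ∃ (l : ℕ) (c : Fin l → ℤ) (F : Fin l → HG d),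
      (∀ i, F i ∈ 𝒢) ∧ H = ∑ i, c i • F i}
/-- `G` is an `(m, a)`-simple `k`-hypergraph:
its vertex set is (contained in) a disjoint union `A ∪ B ∪ C` with
`A = {α₁, …, α_m}`, `B = {β₁, …, β_m}` and `|C| = 2(k−m) − 1`
(`C = ∅` when `m = k`), such that
`w_X(G) = (−1)^{|B ∩ X|} · a` for every `X = {x₁, …, x_m}` with
`x_i ∈ {α_i, β_i}` for each `i`, `w_X(G) = 0` for every other `m`-element set
`X` of vertices, and `w_X(G) = 0` for every set `X` of vertices with
`|X| < m`. -/
def IsSimple {d : ℕ} (k m : ℕ) (a : Fin d → ℤ) (G : HG d) : Prop :=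
  ∃ (A B C : Finset ℕ) (α β : Fin m → ℕ),
    Function.Injective α ∧ Function.Injective β ∧
    A = Finset.image α Finset.univ ∧ B = Finset.image β Finset.univ ∧
    Disjoint A B ∧ Disjoint A C ∧ Disjoint B C ∧
    C.card = 2 * (k - m) - 1 ∧
    verts G ⊆ A ∪ B ∪ C ∧
    (∀ χ : Fin m → Bool,
      weight (Finset.image (fun i => if χ i then β i else α i) Finset.univ) G
        = ((-1 : ℤ) ^ (Finset.univ.filter (fun i => χ i = true)).card) • a) ∧
    (∀ X : Finset ℕ, X ⊆ A ∪ B ∪ C → X.card = m →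
        (∀ χ : Fin m → Bool,
          X ≠ Finset.image (fun i => if χ i then β i else α i) Finset.univ) →
        weight X G = 0) ∧
    (∀ X : Finset ℕ, X ⊆ A ∪ B ∪ C → X.card < m → weight X G = 0)

/-- `S` is a simplification of the family `𝒢`: for every `0 ≤ m ≤ k` and every
vector `g` in the `ℤ`-span of the weights of `m`-element sets of vertices of
members of `𝒢`, the family `S` contains an `(m, g)`-simple `k`-hypergraph. -/
def IsSimplificationOf {d : ℕ} (k : ℕ) (S 𝒢 : Set (HG d)) : Prop :=
  ∀ m : ℕ, m ≤ k →
    ∀ g ∈ Submodule.span ℤ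
      {w : Fin d → ℤ | ∃ G ∈ 𝒢, ∃ X : Finset ℕ,
        X ⊆ verts G ∧ X.card = m ∧ w = weight X G},
      ∃ G' ∈ S, IsSimple k m g G'

/-- `S` is self-simplified: `S` is a simplification of `S` itself. -/
def SelfSimplified {d : ℕ} (k : ℕ) (S : Set (HG d)) : Prop :=
  IsSimplificationOf k S S

/-- `S` is simple for `𝒢`: `S` is self-simplified and a simplification of `𝒢`. -/
def SimpleFor {d : ℕ} (k : ℕ) (S 𝒢 : Set (HG d)) : Prop :=
  SelfSimplified k S ∧ IsSimplificationOf k S 𝒢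


section Helpers

variable {d : ℕ}

lemma weight_eq_sum (X : Finset ℕ) (H : HG d) (t : Finset (Finset ℕ)) (ht : H.support ⊆ t) :
    weight X H = ∑ e ∈ t.filter (fun e => X ⊆ e), H e := by
  unfold weight
  refine Finset.sum_subset (Finset.filter_subset_filter _ ht) ?_
  intro e het hes
  simp only [Finset.mem_filter] at het hes
  by_contra h
  exact hes ⟨Finsupp.mem_support_iff.mpr h, het.2⟩

lemma weight_sub (X : Finset ℕ) (H K : HG d) :
    weight X (H - K) = weight X H - weight X K := by
  rw [weight_eq_sum X (H - K) (H.support ∪ K.support) Finsupp.support_sub,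
      weight_eq_sum X H (H.support ∪ K.support) Finset.subset_union_left,
      weight_eq_sum X K (H.support ∪ K.support) Finset.subset_union_right,
      ← Finset.sum_sub_distrib]
  exact Finset.sum_congr rfl (fun e _ => by simp)

lemma weight_single (X e : Finset ℕ) (a : Fin d → ℤ) :
    weight X (Finsupp.single e a : HG d) = if X ⊆ e then a else 0 := by
  rw [weight_eq_sum X _ {e} Finsupp.support_single_subset]
  by_cases h : X ⊆ e
  · simp [Finset.filter_singleton, h]
  · simp [Finset.filter_singleton, h]

def permHG (π : ℕ ≃ ℕ) (G : HG d) : HG d := Finsupp.equivMapDomain π.finsetCongr G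

lemma permHG_apply (π : ℕ ≃ ℕ) (G : HG d) (f : Finset ℕ) :
    permHG π G f = G (f.image π.symm) := by
  simp [permHG, Finsupp.equivMapDomain_apply, Finset.map_eq_image]

lemma permHG_mem_Eqs (π : ℕ ≃ ℕ) (G : HG d) : permHG π G ∈ Eqs {G} := by
  refine ⟨G, rfl, π, fun e => ?_⟩
  rw [permHG_apply]
  congr 1
  rw [Finset.image_image]
  simp

lemma self_mem_Eqs (G : HG d) : G ∈ Eqs {G} := by
  refine ⟨G, rfl, Equiv.refl ℕ, fun e => ?_⟩
  simp

lemma apply_eq_zero_of_card_ne {G : HG d} (hG : IsHG 1 G) (f : Finset ℕ) (hf : f.card ≠ 1) :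
    G f = 0 := by
  by_contra h
  exact hf (hG f (Finsupp.mem_support_iff.mpr h))

lemma apply_eq_zero_of_not_mem_verts (G : HG d) (y : ℕ) (hy : y ∉ verts G) : G {y} = 0 := by
  by_contra h
  exact hy (Finset.mem_sup.mpr ⟨{y}, Finsupp.mem_support_iff.mpr h, Finset.mem_singleton_self y⟩)

lemma support_eq_image_verts {G : HG d} (hG : IsHG 1 G) :
    G.support = (verts G).image (fun v => ({v} : Finset ℕ)) := by
  ext e
  simp only [Finset.mem_image]
  constructor
  · intro he
    obtain ⟨v, rfl⟩ := Finset.card_eq_one.mp (hG e he)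
    exact ⟨v, Finset.mem_sup.mpr ⟨{v}, he, Finset.mem_singleton_self v⟩, rfl⟩
  · rintro ⟨v, hv, rfl⟩
    obtain ⟨e, he, hve⟩ := Finset.mem_sup.mp hv
    obtain ⟨w, rfl⟩ := Finset.card_eq_one.mp (hG e he)
    have : v = w := Finset.mem_singleton.mp hve
    subst this
    exact he

lemma weight_empty_eq {G : HG d} (hG : IsHG 1 G) :
    weight ∅ G = ∑ v ∈ verts G, G {v} := by
  unfold weight
  rw [Finset.filter_true_of_mem (fun _ _ => Finset.empty_subset _), support_eq_image_verts hG,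
      Finset.sum_image (fun a _ b _ h => Finset.singleton_injective h)]

lemma weight_singleton_eq {G : HG d} (hG : IsHG 1 G) (x : ℕ) :
    weight {x} G = G {x} := by
  unfold weight
  have hsub : G.support.filter (fun e => {x} ⊆ e) ⊆ {({x} : Finset ℕ)} := by
    intro e he
    rw [Finset.mem_filter] at he
    rw [Finset.mem_singleton]
    exact (Finset.eq_of_subset_of_card_le he.2 (by rw [hG e he.1]; simp)).symm
  rcases Finset.subset_singleton_iff.mp hsub with h | h
  · rw [h, Finset.sum_empty]
    have hx : ({x} : Finset ℕ) ∉ G.support := by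
      intro hmem
      have : ({x} : Finset ℕ) ∈ G.support.filter (fun e => {x} ⊆ e) :=
        Finset.mem_filter.mpr ⟨hmem, subset_rfl⟩
      rw [h] at this
      exact absurd this (Finset.notMem_empty _)
    rw [Finsupp.notMem_support_iff.mp hx]
  · rw [h, Finset.sum_singleton]

lemma verts_single_subset (e : Finset ℕ) (a : Fin d → ℤ) :
    verts (Finsupp.single e a : HG d) ⊆ e := by
  intro v hv
  obtain ⟨f, hf, hvf⟩ := Finset.mem_sup.mp hv
  have := Finsupp.support_single_subset hf
  rw [Finset.mem_singleton] at this
  subst this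
  exact hvf

end Helpers

/-- **Lemma (induction base: arity 1).**
Let `G = (V, μ)` be a `1`-hypergraph of dimension `d`.  Then for every subset
`X ⊆ V` with `|X| ≤ 1` there exists a `(|X|, w_X(G))`-simple `1`-hypergraph
`S` such that `S ∈ Σ_ℤ(Eqs({G}))`. -/
theorem induction_base_arity_one
    (d : ℕ) (hd : 1 ≤ d)
    (G : HG d) (hG : IsHG 1 G)
    (V : Finset ℕ) (hV : verts G ⊆ V)
    (X : Finset ℕ) (hX : X ⊆ V) (hXcard : X.card ≤ 1) :
    ∃ S : HG d, S ∈ Zsum (Eqs {G}) ∧ IsHG 1 S ∧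
      IsSimple 1 X.card (weight X G) S := by
  rcases Nat.le_one_iff_eq_zero_or_eq_one.mp hXcard with h0 | h1
  · -- case |X| = 0
    rw [Finset.card_eq_zero] at h0
    subst h0
    obtain ⟨c, hc⟩ := Infinite.exists_notMem_finset V
    have hcv : c ∉ verts G := fun h => hc (hV h)
    set a : Fin d → ℤ := weight ∅ G with ha
    refine ⟨Finsupp.single {c} a, ?_, ?_, ?_⟩
    · -- Zsum membership
      refine ⟨(verts G).card + 1, Fin.cases (1 - ((verts G).card : ℤ)) (fun _ => 1),
        Fin.cases G (fun j => permHG (Equiv.swap ((verts G).equivFin.symm j : ℕ) c) G), ?_, ?_⟩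
      · intro i
        refine Fin.cases ?_ ?_ i
        · exact self_mem_Eqs G
        · intro j
          simp only [Fin.cases_succ]
          exact permHG_mem_Eqs _ _
      · rw [Fin.sum_univ_succ]
        simp only [Fin.cases_zero, Fin.cases_succ, one_smul]
        have hsum : ∑ j : Fin (verts G).card,
            permHG (Equiv.swap (((verts G).equivFin.symm j : ℕ)) c) G
            = ∑ v ∈ verts G, permHG (Equiv.swap v c) G := by
          rw [← Finset.sum_coe_sort (verts G) (fun v => permHG (Equiv.swap v c) G)]
          exact (Fintype.sum_equiv (verts G).equivFin _ _ (fun v => by simp)).symm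
        rw [hsum]
        ext f
        rw [Finsupp.add_apply, Finsupp.smul_apply, Finsupp.finset_sum_apply, Finsupp.single_apply]
        simp only [permHG_apply, Equiv.symm_swap]
        rcases eq_or_ne f.card 1 with hcard | hcard
        · obtain ⟨y, rfl⟩ := Finset.card_eq_one.mp hcard
          simp only [Finset.image_singleton]
          by_cases hyc : y = c
          · subst hyc
            rw [if_pos rfl]
            have h2 : ∀ v ∈ verts G, G {Equiv.swap v y y} = G {v} := fun v hv => by
              rw [Equiv.swap_apply_right]
            rw [Finset.sum_congr rfl h2, apply_eq_zero_of_not_mem_verts G y hcv, smul_zero,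
              zero_add, ha, weight_empty_eq hG]
          · rw [if_neg (fun h => hyc (Finset.singleton_injective h.symm))]
            by_cases hyv : y ∈ verts G
            · have h2 : ∀ v ∈ verts G, G {Equiv.swap v c y}
                  = G {y} - (if v = y then G {y} else 0) := by
                intro v hv
                by_cases hvy : v = y
                · subst hvy
                  rw [Equiv.swap_apply_left, if_pos rfl,
                    apply_eq_zero_of_not_mem_verts G c hcv]
                  simp
                · rw [Equiv.swap_apply_of_ne_of_ne (fun h => hvy h.symm) hyc, if_neg hvy]
                  simp
              rw [Finset.sum_congr rfl h2, Finset.sum_sub_distrib, Finset.sum_const,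
                Finset.sum_ite_eq' (verts G) y (fun _ => G {y}), if_pos hyv,
                ← natCast_zsmul (G {y}) (verts G).card, sub_smul, one_smul]
              simp only [Pi.add_apply, Pi.smul_apply, Pi.sub_apply, Pi.zero_apply, smul_eq_mul,
                Pi.neg_apply]
              ring
            · have h2 : ∀ v ∈ verts G, G {Equiv.swap v c y} = 0 := by
                intro v hv
                rw [Equiv.swap_apply_of_ne_of_ne (fun h => hyv (by rw [h]; exact hv)) hyc]
                exact apply_eq_zero_of_not_mem_verts G y hyv
              rw [Finset.sum_congr rfl h2, Finset.sum_const, smul_zero,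
                apply_eq_zero_of_not_mem_verts G y hyv, smul_zero, add_zero]
        · have h2 : ∀ v ∈ verts G, G (Finset.image (⇑(Equiv.swap v c)) f) = 0 := by
            intro v hv
            exact apply_eq_zero_of_card_ne hG _
              (by rw [Finset.card_image_of_injective _ (Equiv.injective _)]; exact hcard)
          rw [if_neg (fun h => hcard (by rw [← h]; simp)), Finset.sum_congr rfl h2,
            Finset.sum_const, smul_zero, apply_eq_zero_of_card_ne hG f hcard, smul_zero, add_zero]
    · -- IsHG 1
      intro e he
      have := Finsupp.support_single_subset he
      rw [Finset.mem_singleton] at this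
      subst this
      simp
    · -- IsSimple
      rw [Finset.card_empty]
      refine ⟨∅, ∅, {c}, Fin.elim0, Fin.elim0, fun i => i.elim0, fun i => i.elim0,
        by simp, by simp, by simp, by simp, by simp, by simp, ?_, ?_, ?_, ?_⟩
      · exact (verts_single_subset _ _).trans (by simp)
      · intro χ
        rw [Finset.univ_eq_empty, Finset.image_empty, weight_single,
          if_pos (Finset.empty_subset _)]
        simp
      · intro X' _ h2 h3
        exact absurd (Finset.card_eq_zero.mp h2) (by simpa using h3 Fin.elim0)
      · intro X' _ h2
        exact absurd h2 (Nat.not_lt_zero _)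
  · -- case |X| = 1
    obtain ⟨x, rfl⟩ := Finset.card_eq_one.mp h1
    obtain ⟨b, hb⟩ := Infinite.exists_notMem_finset V
    have hbv : b ∉ verts G := fun h => hb (hV h)
    have hbx : b ≠ x := fun h => hb (h ▸ hX (Finset.mem_singleton_self x))
    set a : Fin d → ℤ := G {x} with ha
    have hwa : weight {x} G = a := weight_singleton_eq hG x
    set S : HG d := Finsupp.single {x} a - Finsupp.single {b} a with hS
    have hsupp : S.support ⊆ {({x} : Finset ℕ), {b}} := by
      intro e he
      rcases Finset.mem_union.mp (Finsupp.support_sub he) with h | h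
      · exact Finset.mem_insert.mpr (Or.inl (Finset.mem_singleton.mp
          (Finsupp.support_single_subset h)))
      · exact Finset.mem_insert.mpr (Or.inr (Finsupp.support_single_subset h))
    have himg : ∀ χ : Fin 1 → Bool,
        Finset.image (fun i => if χ i then b else x) (Finset.univ : Finset (Fin 1))
          = {if χ 0 then b else x} := by
      intro χ
      rw [Finset.univ_unique, Finset.image_singleton]
      rfl
    have hkey : S = G - permHG (Equiv.swap x b) G := by
      ext f
      rw [hS, Finsupp.sub_apply, Finsupp.sub_apply, permHG_apply, Equiv.symm_swap,
        Finsupp.single_apply, Finsupp.single_apply]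
      rcases eq_or_ne f.card 1 with hcard | hcard
      · obtain ⟨y, rfl⟩ := Finset.card_eq_one.mp hcard
        rw [Finset.image_singleton]
        by_cases hyx : y = x
        · subst hyx
          rw [if_pos rfl, if_neg (fun h => hbx (Finset.singleton_injective h)),
            Equiv.swap_apply_left, apply_eq_zero_of_not_mem_verts G b hbv]
        · by_cases hyb : y = b
          · subst hyb
            rw [if_neg (fun h => hyx (Finset.singleton_injective h.symm)), if_pos rfl,
              Equiv.swap_apply_right, apply_eq_zero_of_not_mem_verts G y hbv]
          · rw [if_neg (fun h => hyx (Finset.singleton_injective h.symm)),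
              if_neg (fun h => hyb (Finset.singleton_injective h.symm)),
              Equiv.swap_apply_of_ne_of_ne hyx hyb]
            simp
      · have hx1 : ({x} : Finset ℕ) ≠ f := fun h => hcard (by rw [← h]; simp)
        have hb1 : ({b} : Finset ℕ) ≠ f := fun h => hcard (by rw [← h]; simp)
        rw [if_neg hx1, if_neg hb1, apply_eq_zero_of_card_ne hG f hcard,
          apply_eq_zero_of_card_ne hG _
            (by rw [Finset.card_image_of_injective _ (Equiv.injective _)]; exact hcard)]
    refine ⟨S, ?_, ?_, ?_⟩
    · refine ⟨2, ![1, -1], ![G, permHG (Equiv.swap x b) G], ?_, ?_⟩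
      · intro i
        fin_cases i
        · exact self_mem_Eqs G
        · exact permHG_mem_Eqs _ _
      · rw [Fin.sum_univ_two]
        simp only [Matrix.cons_val_zero, Matrix.cons_val_one, Matrix.head_cons]
        rw [one_smul, neg_one_smul, ← sub_eq_add_neg]
        exact hkey
    · intro e he
      rcases Finset.mem_insert.mp (hsupp he) with h | h
      · rw [h]; simp
      · rw [Finset.mem_singleton.mp h]; simp
    · rw [Finset.card_singleton, hwa]
      refine ⟨{x}, {b}, ∅, fun _ => x, fun _ => b,
        fun i j _ => Subsingleton.elim i j, fun i j _ => Subsingleton.elim i j,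
        ?_, ?_, by simp [Finset.disjoint_singleton]; omega,
        by simp, by simp, by simp, ?_, ?_, ?_, ?_⟩
      · ext z; simp [eq_comm]
      · ext z; simp [eq_comm]
      · intro v hv
        obtain ⟨e, he, hve⟩ := Finset.mem_sup.mp hv
        rcases Finset.mem_insert.mp (hsupp he) with h | h
        · subst h; simp at hve; simp [hve]
        · rw [Finset.mem_singleton.mp h] at hve; simp at hve; simp [hve]
      · intro χ
        rw [himg χ]
        by_cases hχ : χ 0
        · rw [if_pos hχ, hS, weight_sub, weight_single, weight_single,
            if_neg (fun h => hbx (Finset.singleton_subset_iff.mp h |> Finset.mem_singleton.mp)),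
            if_pos subset_rfl]
          have hfil : (Finset.univ.filter (fun i : Fin 1 => χ i = true)) = {0} := by
            rw [Finset.univ_unique, Finset.filter_singleton, if_pos]
            · rfl
            · exact hχ
          rw [hfil]
          simp
        · rw [if_neg hχ, hS, weight_sub, weight_single, weight_single, if_pos subset_rfl,
            if_neg (fun h => hbx ((Finset.singleton_subset_iff.mp h |> Finset.mem_singleton.mp).symm))]
          have hfil : (Finset.univ.filter (fun i : Fin 1 => χ i = true)) = ∅ := by
            rw [Finset.univ_unique, Finset.filter_singleton, if_neg]
            simpa using hχ
          rw [hfil]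
          simp
      · intro X' hsub' hcard' hne
        obtain ⟨y, rfl⟩ := Finset.card_eq_one.mp hcard'
        have hy := hsub' (Finset.mem_singleton_self y)
        simp only [Finset.union_empty, Finset.mem_union, Finset.mem_singleton] at hy
        rcases hy with h | h
        · exact absurd (by rw [himg]; simp [h]) (hne (fun _ => false))
        · exact absurd (by rw [himg]; simp [h]) (hne (fun _ => true))
      · intro X' _ hcard'
        rw [Finset.card_eq_zero.mp (Nat.lt_one_iff.mp hcard'), hS, weight_sub,
          weight_single, weight_single, if_pos (Finset.empty_subset _),
          if_pos (Finset.empty_subset _)]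
        simp
end

section
/- Let G = (V, μ) be a 2-hypergraph (a graph) of dimension d, let e be a hyperedge of G (a 2-element subset of V with μ(e) ≠ 0), and let a = w_e(G) = μ(e). Then the a-edge-simple graph S²_a satisfies S²_a ∈ Σ_ℤ(Eqs({G})). -/
/-- The `a`-edge-simple graph `S²_a` (on the four distinct vertices
`α₁, α₂, β₁, β₂`): the `2`-hypergraph with weights `μ({α₁,α₂}) = μ({β₁,β₂}) = a`,
`μ({α₁,β₂}) = μ({β₁,α₂}) = −a`, and `μ({α₁,β₁}) = μ({α₂,β₂}) = 0`. -/
noncomputable def edgeSimple {d : ℕ} (a : Fin d → ℤ) (α₁ α₂ β₁ β₂ : ℕ) : HG d :=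
  Finsupp.single {α₁, α₂} a + Finsupp.single {β₁, β₂} a
    - Finsupp.single {α₁, β₂} a - Finsupp.single {β₁, α₂} a

lemma exists_perm_extend (s : Finset ℕ) (f : ℕ → ℕ) (hf : Set.InjOn f ↑s) :
    ∃ π : Equiv.Perm ℕ, ∀ x ∈ s, π x = f x := by
  classical
  let e₀ : (↑s : Set ℕ) ≃ (f '' ↑s : Set ℕ) := Equiv.Set.imageOfInjOn f ↑s hf
  have h1 : ((↑s : Set ℕ)ᶜ).Infinite := s.finite_toSet.infinite_compl
  have h2 : ((f '' ↑s : Set ℕ))ᶜ.Infinite := (s.finite_toSet.image f).infinite_compl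
  haveI := h1.to_subtype
  haveI := h2.to_subtype
  obtain ⟨d1⟩ := nonempty_denumerable (↥((↑s : Set ℕ)ᶜ))
  obtain ⟨d2⟩ := nonempty_denumerable (↥((f '' ↑s : Set ℕ)ᶜ))
  let e₁ : ((↑s : Set ℕ)ᶜ : Set ℕ) ≃ ((f '' ↑s : Set ℕ)ᶜ : Set ℕ) :=
    (@Denumerable.eqv _ d1).trans (@Denumerable.eqv _ d2).symm
  obtain ⟨π, hπ⟩ := (Equiv.Set.compl e₀).symm e₁
  exact ⟨π, fun x hx => by simpa [e₀, Equiv.Set.imageOfInjOn] using hπ ⟨x, hx⟩⟩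

lemma perm_image_mem_Eqs {d : ℕ} (G : HG d) (π : Equiv.Perm ℕ) :
    (Finsupp.domCongr (M := Fin d → ℤ) π.finsetCongr) G ∈ Eqs {G} := by
  refine ⟨G, rfl, π, fun e => ?_⟩
  simp [Finsupp.domCongr_apply, Finsupp.equivMapDomain_apply, Equiv.finsetCongr_symm,
    Equiv.finsetCongr_apply, Finset.map_eq_image, Finset.image_image]

lemma perm_image_rep {d : ℕ} (G : HG d) (π : Equiv.Perm ℕ) :
    (Finsupp.domCongr (M := Fin d → ℤ) π.finsetCongr) G
      = ∑ e' ∈ G.support, Finsupp.single (e'.image π) (G e') := by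
  conv_lhs => rw [← Finsupp.sum_single G]
  rw [Finsupp.sum, map_sum]
  refine Finset.sum_congr rfl fun e' _ => ?_
  simp [Finsupp.domCongr_apply, Finsupp.equivMapDomain_single, Equiv.finsetCongr_apply,
    Finset.map_eq_image]

/-- **Lemma (edge-simple graphs are expressible).**
Let `G = (V, μ)` be a graph (`2`-hypergraph) of dimension `d`, let `e` be a
hyperedge of `G` (a `2`-element subset of `V` with `μ(e) ≠ 0`), and let
`a = w_e(G) = μ(e)`.  Then the `a`-edge-simple graph `S²_a` (taken on any four
distinct vertices, as it is defined up to equivalence) satisfies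
`S²_a ∈ Σ_ℤ(Eqs({G}))`. -/
theorem edge_simple_expressible
    (d : ℕ) (hd : 1 ≤ d)
    (G : HG d) (hG : IsHG 2 G)
    (e : Finset ℕ) (he : e ∈ G.support) (hecard : e.card = 2)
    (α₁ α₂ β₁ β₂ : ℕ) (hdist : ({α₁, α₂, β₁, β₂} : Finset ℕ).card = 4) :
    edgeSimple (weight e G) α₁ α₂ β₁ β₂ ∈ Zsum (Eqs {G}) := by
  classical
  -- distinctness of the four vertices
  have hβ : β₁ ≠ β₂ := by
    rintro rfl
    have h3 : ({α₁, α₂, β₁, β₁} : Finset ℕ).card ≤ 3 := by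
      calc ({α₁, α₂, β₁, β₁} : Finset ℕ).card
          ≤ ({α₂, β₁, β₁} : Finset ℕ).card + 1 := Finset.card_insert_le _ _
        _ ≤ (({β₁, β₁} : Finset ℕ).card + 1) + 1 := by
            exact Nat.add_le_add_right (Finset.card_insert_le _ _) 1
        _ ≤ 3 := by simp
    omega
  have hα : α₁ ≠ α₂ := by
    rintro rfl
    have h3 : ({α₁, α₁, β₁, β₂} : Finset ℕ).card ≤ 3 := by
      calc ({α₁, α₁, β₁, β₂} : Finset ℕ).card
          = ({α₁, β₁, β₂} : Finset ℕ).card := by rw [Finset.insert_idem]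
        _ ≤ ({β₁, β₂} : Finset ℕ).card + 1 := Finset.card_insert_le _ _
        _ ≤ 3 := by have := Finset.card_insert_le β₁ ({β₂} : Finset ℕ); simp at this ⊢; omega
    omega
  have h12 : α₁ ≠ β₂ := by
    rintro rfl
    have h3 : ({α₁, α₂, β₁, α₁} : Finset ℕ).card ≤ 3 := by
      have : ({α₁, α₂, β₁, α₁} : Finset ℕ) = ({α₁, α₂, β₁} : Finset ℕ) := by
        ext x; simp; try tauto
      rw [this]
      calc ({α₁, α₂, β₁} : Finset ℕ).card ≤ ({α₂, β₁} : Finset ℕ).card + 1 :=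
            Finset.card_insert_le _ _
        _ ≤ 3 := by have := Finset.card_insert_le α₂ ({β₁} : Finset ℕ); simp at this ⊢; omega
    omega
  have h21 : β₁ ≠ α₂ := by
    rintro rfl
    have h3 : ({α₁, β₁, β₁, β₂} : Finset ℕ).card ≤ 3 := by
      have heq : ({α₁, β₁, β₁, β₂} : Finset ℕ) = ({α₁, β₁, β₂} : Finset ℕ) := by
        ext x; simp; try tauto
      rw [heq]
      calc ({α₁, β₁, β₂} : Finset ℕ).card ≤ ({β₁, β₂} : Finset ℕ).card + 1 :=
            Finset.card_insert_le _ _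
        _ ≤ 3 := by have := Finset.card_insert_le β₁ ({β₂} : Finset ℕ); simp at this ⊢; omega
    omega
  -- decompose e
  obtain ⟨u, v, huv, rfl⟩ := Finset.card_eq_two.mp hecard
  set a : Fin d → ℤ := G {u, v} with ha
  -- weight = G e
  have hw : weight {u, v} G = a := by
    unfold weight
    have hfil : G.support.filter (fun e' => ({u, v} : Finset ℕ) ⊆ e') = {({u, v} : Finset ℕ)} := by
      ext e'
      simp only [Finset.mem_filter, Finset.mem_singleton]
      constructor
      · rintro ⟨hs, hsub⟩
        exact (Finset.eq_of_subset_of_card_le hsub (by rw [hG e' hs, hecard])).symm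
      · rintro rfl; exact ⟨he, Finset.Subset.refl _⟩
    rw [hfil, Finset.sum_singleton]
  -- the bound N and the four target functions
  set N : ℕ := α₁ + α₂ + β₁ + β₂ + 1 with hN
  have hltN : α₁ < N ∧ α₂ < N ∧ β₁ < N ∧ β₂ < N := by omega
  set f : ℕ → ℕ → ℕ → ℕ := fun t₁ t₂ w => if w = u then t₁ else if w = v then t₂ else w + N
    with hf
  have hinj : ∀ t₁ t₂ : ℕ, t₁ < N → t₂ < N → t₁ ≠ t₂ → Function.Injective (f t₁ t₂) := by
    intro t₁ t₂ h₁ h₂ h12' w₁ w₂ hw'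
    simp only [hf] at hw'
    split_ifs at hw' with a1 a2 a3 a4 a5 a6 a7 a8 <;> omega
  -- the four permutations
  obtain ⟨π₁, hπ₁⟩ := exists_perm_extend (verts G) (f α₁ α₂)
    ((hinj _ _ hltN.1 hltN.2.1 hα).injOn)
  obtain ⟨π₂, hπ₂⟩ := exists_perm_extend (verts G) (f β₁ β₂)
    ((hinj _ _ hltN.2.2.1 hltN.2.2.2 hβ).injOn)
  obtain ⟨π₃, hπ₃⟩ := exists_perm_extend (verts G) (f α₁ β₂)
    ((hinj _ _ hltN.1 hltN.2.2.2 h12).injOn)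
  obtain ⟨π₄, hπ₄⟩ := exists_perm_extend (verts G) (f β₁ α₂)
    ((hinj _ _ hltN.2.2.1 hltN.2.1 h21).injOn)
  -- support edges lie in verts
  have hsup : ∀ e' ∈ G.support, e' ⊆ verts G := by
    intro e' hs
    exact fun x hx => Finset.mem_sup.mpr ⟨e', hs, hx⟩
  have huverts : u ∈ verts G := hsup _ he (by simp)
  have hvverts : v ∈ verts G := hsup _ he (by simp)
  -- images of an edge under the permutations
  have himg : ∀ (π : Equiv.Perm ℕ) (t₁ t₂ : ℕ), (∀ x ∈ verts G, π x = f t₁ t₂ x) →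
      ∀ e' ∈ G.support, e'.image π = e'.image (f t₁ t₂) := by
    intro π t₁ t₂ hπ e' hs
    exact Finset.image_congr fun x hx => hπ x (hsup _ hs hx)
  -- the four graphs
  set G₁ := (Finsupp.domCongr (M := Fin d → ℤ) π₁.finsetCongr) G with hG₁
  set G₂ := (Finsupp.domCongr (M := Fin d → ℤ) π₂.finsetCongr) G with hG₂
  set G₃ := (Finsupp.domCongr (M := Fin d → ℤ) π₃.finsetCongr) G with hG₃
  set G₄ := (Finsupp.domCongr (M := Fin d → ℤ) π₄.finsetCongr) G with hG₄
  -- main identity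
  have key : edgeSimple (weight {u, v} G) α₁ α₂ β₁ β₂ = G₁ + G₂ - G₃ - G₄ := by
    rw [hw, hG₁, hG₂, hG₃, hG₄, perm_image_rep, perm_image_rep, perm_image_rep, perm_image_rep]
    rw [← Finset.sum_add_distrib, ← Finset.sum_sub_distrib, ← Finset.sum_sub_distrib]
    rw [Finset.sum_eq_single_of_mem ({u, v} : Finset ℕ) he]
    · -- the term at e
      have himguv : ∀ (π : Equiv.Perm ℕ) (t₁ t₂ : ℕ), (∀ x ∈ verts G, π x = f t₁ t₂ x) →
          (({u, v} : Finset ℕ)).image π = {t₁, t₂} := by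
        intro π t₁ t₂ hπ
        rw [himg π t₁ t₂ hπ _ he]
        rw [Finset.image_insert, Finset.image_singleton]
        have h1 : f t₁ t₂ u = t₁ := by simp [hf]
        have h2 : f t₁ t₂ v = t₂ := by simp [hf, Ne.symm huv]
        rw [h1, h2]
      rw [himguv π₁ _ _ hπ₁, himguv π₂ _ _ hπ₂, himguv π₃ _ _ hπ₃, himguv π₄ _ _ hπ₄]
      rfl
    · -- other terms vanish
      intro e' hs hne
      have hc2 : e'.card = 2 := hG e' hs
      rw [himg π₁ _ _ hπ₁ _ hs, himg π₂ _ _ hπ₂ _ hs, himg π₃ _ _ hπ₃ _ hs,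
        himg π₄ _ _ hπ₄ _ hs]
      by_cases hu' : u ∈ e' <;> by_cases hv' : v ∈ e'
      · exfalso
        apply hne
        refine (Finset.eq_of_subset_of_card_le ?_ (by rw [hc2, hecard])).symm
        intro x hx
        simp only [Finset.mem_insert, Finset.mem_singleton] at hx
        rcases hx with rfl | rfl <;> assumption
      · -- u ∈ e', v ∉ e'
        have h13 : e'.image (f α₁ α₂) = e'.image (f α₁ β₂) := by
          refine Finset.image_congr fun x hx => ?_
          have hxv : x ≠ v := fun h => hv' (h ▸ hx)
          simp [hf, hxv]
        have h24 : e'.image (f β₁ β₂) = e'.image (f β₁ α₂) := by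
          refine Finset.image_congr fun x hx => ?_
          have hxv : x ≠ v := fun h => hv' (h ▸ hx)
          simp [hf, hxv]
        rw [h13, h24]; abel
      · -- v ∈ e', u ∉ e'
        have h14 : e'.image (f α₁ α₂) = e'.image (f β₁ α₂) := by
          refine Finset.image_congr fun x hx => ?_
          have hxu : x ≠ u := fun h => hu' (h ▸ hx)
          simp [hf, hxu]
        have h23 : e'.image (f β₁ β₂) = e'.image (f α₁ β₂) := by
          refine Finset.image_congr fun x hx => ?_
          have hxu : x ≠ u := fun h => hu' (h ▸ hx)
          simp [hf, hxu]
        rw [h14, h23]; abel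
      · -- neither
        have hid : ∀ t₁ t₂ : ℕ, e'.image (f t₁ t₂) = e'.image (fun w => w + N) := by
          intro t₁ t₂
          refine Finset.image_congr fun x hx => ?_
          have hxu : x ≠ u := fun h => hu' (h ▸ hx)
          have hxv : x ≠ v := fun h => hv' (h ▸ hx)
          simp [hf, hxu, hxv]
        rw [hid, hid, hid, hid]; abel
  -- assemble the Zsum membership
  refine ⟨4, ![1, 1, -1, -1], ![G₁, G₂, G₃, G₄], ?_, ?_⟩
  · intro i
    fin_cases i
    · exact perm_image_mem_Eqs G π₁
    · exact perm_image_mem_Eqs G π₂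
    · exact perm_image_mem_Eqs G π₃
    · exact perm_image_mem_Eqs G π₄
  · rw [key, Fin.sum_univ_four]
    simp only [Matrix.cons_val_zero, Matrix.cons_val_one, Matrix.head_cons, Matrix.cons_val_two,
      Matrix.tail_cons, Matrix.cons_val_three]
    rw [one_smul, one_smul, neg_one_smul, neg_one_smul]
    abel
end

section
/- Let G = (V, μ) be a 2-hypergraph (a graph) of dimension d, let α ∈ V be a vertex of G, and let a = w_α(G) (the sum of the weights of all edges of G containing α). Then the a-vertex-simple graph S¹_a satisfies S¹_a ∈ Σ_ℤ(Eqs({G})). -/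
/-- The `a`-vertex-simple graph `S¹_a` (on the three distinct vertices
`α, β, γ`): the `2`-hypergraph with weights `μ({α,γ}) = a`, `μ({β,γ}) = −a`,
and `μ({α,β}) = 0`. -/
noncomputable def vertexSimple {d : ℕ} (a : Fin d → ℤ) (α β γ : ℕ) : HG d :=
  Finsupp.single {α, γ} a - Finsupp.single {β, γ} a

lemma mem_Zsum_of_mem_span {d : ℕ} {𝒢 : Set (HG d)} {H : HG d}
    (h : H ∈ Submodule.span ℤ 𝒢) : H ∈ Zsum 𝒢 := by
  rw [Submodule.mem_span_set'] at h
  obtain ⟨n, f, g, hsum⟩ := h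
  exact ⟨n, f, fun i => (g i : HG d), fun i => (g i).2, hsum.symm⟩

noncomputable def mapHG {d : ℕ} (π : Equiv.Perm ℕ) (G : HG d) : HG d :=
  Finsupp.equivMapDomain π.finsetCongr G

lemma mapHG_mem_Eqs {d : ℕ} (π : Equiv.Perm ℕ) (G : HG d) :
    mapHG π G ∈ Eqs {G} := by
  refine ⟨G, rfl, π, fun e => ?_⟩
  simp [mapHG, Finsupp.equivMapDomain_apply, Equiv.finsetCongr_symm,
    Equiv.finsetCongr_apply, Finset.map_eq_image, Finset.image_image]

lemma mapHG_eq_sum {d : ℕ} (π : Equiv.Perm ℕ) (G : HG d) :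
    mapHG π G = ∑ e ∈ G.support, Finsupp.single (e.image π) (G e) := by
  rw [mapHG, Finsupp.equivMapDomain_eq_mapDomain, Finsupp.mapDomain, Finsupp.sum]
  exact Finset.sum_congr rfl fun e _ => by
    simp [Equiv.finsetCongr_apply, Finset.map_eq_image]

lemma edge_of_mem_support {d : ℕ} {G : HG d} (hG : IsHG 2 G) {v : ℕ} {e : Finset ℕ}
    (he : e ∈ G.support) (hve : v ∈ e) :
    ∃ w ∈ (verts G).erase v, e = {v, w} := by
  have hcard : e.card = 2 := hG e he
  have h1 : (e.erase v).card = 1 := by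
    rw [Finset.card_erase_of_mem hve, hcard]
  obtain ⟨w, hw⟩ := Finset.card_eq_one.mp h1
  have hwe : w ∈ e := Finset.mem_of_mem_erase (hw ▸ Finset.mem_singleton_self w)
  have hwv : w ≠ v := Finset.ne_of_mem_erase (hw ▸ Finset.mem_singleton_self w)
  refine ⟨w, Finset.mem_erase.mpr ⟨hwv, ?_⟩, ?_⟩
  · exact Finset.mem_sup.mpr ⟨e, he, hwe⟩
  · have := Finset.insert_erase hve
    rw [hw] at this
    rw [← this]

/-- reindexing sums over edges at `v` as sums over `(verts G).erase v`. -/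
lemma sum_edges_at_vertex {d : ℕ} (G : HG d) (hG : IsHG 2 G) (v : ℕ)
    {A : Type} [AddCommMonoid A] (g : Finset ℕ → A)
    (h0 : ∀ e, G e = 0 → g e = 0) :
    ∑ e ∈ G.support.filter (fun e => v ∈ e), g e
      = ∑ w ∈ (verts G).erase v, g {v, w} := by
  classical
  rw [← Finset.sum_filter_of_ne
    (p := fun w => {v, w} ∈ G.support) (s := (verts G).erase v)
    (fun w _ hne => by
      by_contra hns
      exact hne (h0 _ (Finsupp.notMem_support_iff.mp hns)))]
  refine (Finset.sum_bij (fun w _ => ({v, w} : Finset ℕ)) ?_ ?_ ?_ ?_).symm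
  · intro w hw
    simp only [Finset.mem_filter] at hw ⊢
    exact ⟨hw.2, by simp⟩
  · intro w₁ hw₁ w₂ hw₂ h
    simp only [Finset.mem_filter, Finset.mem_erase] at hw₁ hw₂
    have h' : ({v, w₁} : Finset ℕ) = {v, w₂} := h
    have : w₂ ∈ ({v, w₁} : Finset ℕ) := h' ▸ (by simp : w₂ ∈ ({v, w₂} : Finset ℕ))
    simp only [Finset.mem_insert, Finset.mem_singleton] at this
    rcases this with h' | h'
    · exact absurd h' hw₂.1.1
    · exact h'.symm
  · intro e he
    simp only [Finset.mem_filter] at he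
    obtain ⟨w, hw, hew⟩ := edge_of_mem_support hG he.1 he.2
    exact ⟨w, Finset.mem_filter.mpr ⟨hw, hew ▸ he.1⟩, hew.symm⟩
  · intro w hw; rfl

/-- **Lemma (vertex-simple graphs are expressible).**
Let `G = (V, μ)` be a graph (`2`-hypergraph) of dimension `d`, let `v ∈ V` be
a vertex of `G`, and let `a = w_v(G)` be the sum of the weights of all edges
of `G` containing `v`.  Then the `a`-vertex-simple graph `S¹_a` (taken on any
three distinct vertices, as it is defined up to equivalence) satisfies
`S¹_a ∈ Σ_ℤ(Eqs({G}))`. -/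
theorem vertex_simple_expressible
    (d : ℕ) (hd : 1 ≤ d)
    (G : HG d) (hG : IsHG 2 G)
    (v : ℕ) (hv : v ∈ verts G)
    (α β γ : ℕ) (hdist : ({α, β, γ} : Finset ℕ).card = 3) :
    vertexSimple (weight {v} G) α β γ ∈ Zsum (Eqs {G}) := by
  classical
  have hcard_le : ∀ x y : ℕ, ({x, y} : Finset ℕ).card ≤ 2 :=
    fun x y => (Finset.card_insert_le _ _).trans (by simp)
  have hab : α ≠ β := by
    rintro rfl; rw [Finset.insert_idem] at hdist; have := hcard_le α γ; omega
  have hag : α ≠ γ := by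
    rintro rfl; rw [Finset.pair_comm β α, Finset.insert_idem] at hdist
    have := hcard_le α β; omega
  have hbg : β ≠ γ := by
    rintro rfl
    rw [Finset.insert_eq_self.mpr (Finset.mem_singleton_self β)] at hdist
    have := hcard_le α β; omega
  set U : Finset ℕ := (verts G).erase v with hU
  set S : Finset ℕ := insert α (insert β (insert γ (verts G))) with hS
  set M : ℕ := S.sup id + 1 with hMdef
  have hlt : ∀ x ∈ S, x < M := fun x hx =>
    Nat.lt_succ_of_le (Finset.le_sup (f := id) hx)
  have hαM : α < M := hlt _ (by simp [hS])
  have hβM : β < M := hlt _ (by simp [hS])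
  have hγM : γ < M := hlt _ (by simp [hS])
  have hvM : ∀ x ∈ verts G, x < M := fun x hx => hlt x (by simp [hS, hx])
  have hvv : v < M := hvM v hv
  -- the involution sending `verts G` to the fresh zone `verts G + M`
  set r : ℕ → ℕ := fun n =>
    if n ∈ verts G then n + M else if M ≤ n ∧ n - M ∈ verts G then n - M else n with hrdef
  have hrinv : Function.Involutive r := by
    intro n
    by_cases h1 : n ∈ verts G
    · have h2 : n + M ∉ verts G := fun hc => absurd (hvM _ hc) (by omega)
      have h3 : M ≤ n + M ∧ n + M - M ∈ verts G := ⟨by omega, by rw [Nat.add_sub_cancel]; exact h1⟩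
      simp only [hrdef]
      rw [if_pos h1, if_neg h2, if_pos h3, Nat.add_sub_cancel]
    · by_cases h2 : M ≤ n ∧ n - M ∈ verts G
      · have h3 : n - M + M = n := by omega
        simp only [hrdef]
        rw [if_neg h1, if_pos h2, if_pos h2.2, h3]
      · simp only [hrdef]
        rw [if_neg h1, if_neg h2, if_neg h1, if_neg h2]
  set ρ : Equiv.Perm ℕ := hrinv.toPerm with hρdef
  have hρ : ∀ w ∈ verts G, ρ w = w + M := fun w hw => by
    show r w = w + M
    simp only [hrdef]; rw [if_pos hw]
  -- the permutations used for the copies of `G`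
  set Fp : ℕ → ℕ → Equiv.Perm ℕ := fun t u =>
    ρ.trans ((Equiv.swap (u + M) γ).trans (Equiv.swap (v + M) t)) with hFpdef
  set F0 : ℕ → Equiv.Perm ℕ := fun t => ρ.trans (Equiv.swap (v + M) t) with hF0def
  have hFp_eval : ∀ t, t < M → t ≠ γ → ∀ u ∈ U, ∀ w ∈ verts G,
      Fp t u w = if w = v then t else if w = u then γ else w + M := by
    intro t ht htγ u hu w hw
    obtain ⟨huv, huV⟩ := Finset.mem_erase.mp hu
    have huM : u < M := hvM u huV
    have hwM : w < M := hvM w hw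
    simp only [hFpdef, Equiv.trans_apply]
    rw [hρ w hw]
    by_cases h1 : w = v
    · have s1 : Equiv.swap (u + M) γ (w + M) = w + M :=
        Equiv.swap_apply_of_ne_of_ne (by omega) (by omega)
      have s2 : Equiv.swap (v + M) t (w + M) = t := by
        rw [show w + M = v + M by omega]; exact Equiv.swap_apply_left _ _
      rw [s1, s2, if_pos h1]
    · by_cases h2 : w = u
      · have s1 : Equiv.swap (u + M) γ (w + M) = γ := by
          rw [show w + M = u + M by omega]; exact Equiv.swap_apply_left _ _
        have s2 : Equiv.swap (v + M) t γ = γ :=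
          Equiv.swap_apply_of_ne_of_ne (by omega) (Ne.symm htγ)
        rw [s1, s2, if_neg h1, if_pos h2]
      · have s1 : Equiv.swap (u + M) γ (w + M) = w + M :=
          Equiv.swap_apply_of_ne_of_ne (by omega) (by omega)
        have s2 : Equiv.swap (v + M) t (w + M) = w + M :=
          Equiv.swap_apply_of_ne_of_ne (by omega) (by omega)
        rw [s1, s2, if_neg h1, if_neg h2]
  have hF0_eval : ∀ t, t < M → ∀ w ∈ verts G,
      F0 t w = if w = v then t else w + M := by
    intro t ht w hw
    have hwM : w < M := hvM w hw
    simp only [hF0def, Equiv.trans_apply]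
    rw [hρ w hw]
    by_cases h1 : w = v
    · have s2 : Equiv.swap (v + M) t (w + M) = t := by
        rw [show w + M = v + M by omega]; exact Equiv.swap_apply_left _ _
      rw [s2, if_pos h1]
    · have s2 : Equiv.swap (v + M) t (w + M) = w + M :=
        Equiv.swap_apply_of_ne_of_ne (by omega) (by omega)
      rw [s2, if_neg h1]
  have himg : ∀ (π : Equiv.Perm ℕ) (w : ℕ),
      ({v, w} : Finset ℕ).image π = {π v, π w} := by
    intro π w
    simp [Finset.image_insert]
  -- the generic difference-of-two-copies computation
  have keygen : ∀ (πa πb : Equiv.Perm ℕ) (m : ℕ → ℕ),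
      πa v = α → πb v = β → (∀ w ∈ U, πa w = m w) → (∀ w ∈ U, πb w = m w) →
      mapHG πa G - mapHG πb G
        = ∑ w ∈ U, (Finsupp.single {α, m w} (G {v, w})
            - Finsupp.single {β, m w} (G {v, w})) := by
    intro πa πb m ha hb hma hmb
    rw [mapHG_eq_sum, mapHG_eq_sum, ← Finset.sum_sub_distrib]
    have hsub : ∀ e ∈ G.support, e ⊆ verts G := fun e he x hx =>
      Finset.mem_sup.mpr ⟨e, he, hx⟩
    have hfil := Finset.sum_filter_of_ne (p := fun e => v ∈ e) (s := G.support)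
      (f := fun e => Finsupp.single (e.image πa) (G e)
        - Finsupp.single (e.image πb) (G e))
      (fun e he hne => by
        by_contra hve
        apply hne
        have himeq : e.image πa = e.image πb := Finset.image_congr (fun x hx => by
          have hxU : x ∈ U := Finset.mem_erase.mpr
            ⟨fun h => hve (h ▸ hx), hsub e he hx⟩
          rw [hma x hxU, hmb x hxU])
        show Finsupp.single (e.image πa) (G e) - Finsupp.single (e.image πb) (G e) = 0
        rw [himeq, sub_self])
    rw [← hfil, sum_edges_at_vertex G hG v
      (fun e => Finsupp.single (e.image πa) (G e) - Finsupp.single (e.image πb) (G e))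
      (fun e h0 => by
        show Finsupp.single (e.image πa) (G e)
          - Finsupp.single (e.image πb) (G e) = 0
        rw [h0]; simp)]
    refine Finset.sum_congr rfl fun w hw => ?_
    rw [himg, himg, ha, hb, hma w hw, hmb w hw]
  -- the two families of differences
  have keyA : ∀ u ∈ U, mapHG (Fp α u) G - mapHG (Fp β u) G
      = ∑ w ∈ U, (Finsupp.single {α, if w = u then γ else w + M} (G {v, w})
          - Finsupp.single {β, if w = u then γ else w + M} (G {v, w})) := by
    intro u hu
    refine keygen _ _ (fun w => if w = u then γ else w + M) ?_ ?_ ?_ ?_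
    · rw [hFp_eval α hαM hag u hu v hv, if_pos rfl]
    · rw [hFp_eval β hβM hbg u hu v hv, if_pos rfl]
    · intro w hw
      rw [hFp_eval α hαM hag u hu w (Finset.mem_of_mem_erase hw),
        if_neg (Finset.mem_erase.mp hw).1]
    · intro w hw
      rw [hFp_eval β hβM hbg u hu w (Finset.mem_of_mem_erase hw),
        if_neg (Finset.mem_erase.mp hw).1]
  have key0 : mapHG (F0 α) G - mapHG (F0 β) G
      = ∑ w ∈ U, (Finsupp.single {α, w + M} (G {v, w})
          - Finsupp.single {β, w + M} (G {v, w})) := by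
    refine keygen _ _ (fun w => w + M) ?_ ?_ ?_ ?_
    · rw [hF0_eval α hαM v hv, if_pos rfl]
    · rw [hF0_eval β hβM v hv, if_pos rfl]
    · intro w hw
      rw [hF0_eval α hαM w (Finset.mem_of_mem_erase hw),
        if_neg (Finset.mem_erase.mp hw).1]
    · intro w hw
      rw [hF0_eval β hβM w (Finset.mem_of_mem_erase hw),
        if_neg (Finset.mem_erase.mp hw).1]
  -- the weight at `v` is the sum over `U`
  have haw : weight {v} G = ∑ w ∈ U, G {v, w} := by
    rw [weight, Finset.filter_congr
      (fun e _ => by simp : ∀ e ∈ G.support,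
        (({v} : Finset ℕ) ⊆ e) ↔ (v ∈ e))]
    exact sum_edges_at_vertex G hG v (fun e => G e) (fun e h => h)
  -- reorganizing each `keyA` term
  have hper : ∀ u ∈ U, mapHG (Fp α u) G - mapHG (Fp β u) G
      = (∑ w ∈ U, (Finsupp.single {α, w + M} (G {v, w})
            - Finsupp.single {β, w + M} (G {v, w})))
        + ((Finsupp.single {α, γ} (G {v, u}) - Finsupp.single {β, γ} (G {v, u}))
            - (Finsupp.single {α, u + M} (G {v, u})
              - Finsupp.single {β, u + M} (G {v, u}))) := by
    intro u hu
    rw [keyA u hu]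
    have hcong : ∀ w ∈ U,
        (Finsupp.single {α, if w = u then γ else w + M} (G {v, w})
          - Finsupp.single {β, if w = u then γ else w + M} (G {v, w}))
        = (Finsupp.single {α, w + M} (G {v, w})
            - Finsupp.single {β, w + M} (G {v, w}))
          + (if w = u then
              (Finsupp.single ({α, γ} : Finset ℕ) (G {v, w})
                - Finsupp.single ({β, γ} : Finset ℕ) (G {v, w}))
              - (Finsupp.single ({α, w + M} : Finset ℕ) (G {v, w})
                - Finsupp.single ({β, w + M} : Finset ℕ) (G {v, w}))
            else (0 : HG d)) := by
      intro w hw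
      by_cases h : w = u
      · simp only [if_pos h]; abel
      · simp only [if_neg h]; abel
    rw [Finset.sum_congr rfl hcong, Finset.sum_add_distrib,
      Finset.sum_ite_eq' U u, if_pos hu]
  -- the total of the `γ`-terms is the vertex-simple graph
  have hT : (∑ u ∈ U, (Finsupp.single {α, γ} (G {v, u})
        - Finsupp.single {β, γ} (G {v, u})))
      = vertexSimple (weight {v} G) α β γ := by
    have hs : ∀ c : Finset ℕ,
        ∑ u ∈ U, Finsupp.single c (G {v, u})
          = Finsupp.single c (∑ u ∈ U, G {v, u}) :=
      fun c => (map_sum (Finsupp.singleAddHom c) _ U).symm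
    rw [Finset.sum_sub_distrib, hs, hs, vertexSimple, haw]
  -- the final linear combination
  have hfinal : vertexSimple (weight {v} G) α β γ
      = (∑ u ∈ U, (mapHG (Fp α u) G - mapHG (Fp β u) G))
        - ((U.card : ℤ) - 1) • (mapHG (F0 α) G - mapHG (F0 β) G) := by
    rw [key0, Finset.sum_congr rfl hper, Finset.sum_add_distrib, Finset.sum_const,
      Finset.sum_sub_distrib
        (f := fun u => (Finsupp.single ({α, γ} : Finset ℕ) (G {v, u})
          - Finsupp.single ({β, γ} : Finset ℕ) (G {v, u}) : HG d))
        (g := fun u => (Finsupp.single ({α, u + M} : Finset ℕ) (G {v, u})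
          - Finsupp.single ({β, u + M} : Finset ℕ) (G {v, u}) : HG d)),
      hT, sub_smul, one_smul, Nat.cast_smul_eq_nsmul]
    abel
  apply mem_Zsum_of_mem_span
  rw [hfinal]
  refine sub_mem (Submodule.sum_mem _ fun u hu => sub_mem ?_ ?_)
    (Submodule.smul_mem _ _ (sub_mem ?_ ?_)) <;>
    exact Submodule.subset_span (mapHG_mem_Eqs _ G)
end

section
/- Let U₁ and U₂ be two finite sets of vectors in ℤ^d such that every vector in U₂ is nonreversible in U = U₁ ∪ U₂. Suppose y ∈ Σ_ℕ(U), and consider any solution y = Σ_{v ∈ U₁} a_v·v + Σ_{w ∈ U₂} b_w·w with a_v, b_w ∈ ℕ. Then Σ_{w ∈ U₂} b_w ≤ |U₂| · (‖U‖_{1,∞} + ‖y‖_∞ + 2)^{d + |U|}. -/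
/-- `Σ_ℕ(U)` for a set `U` of vectors in `ℤ^d`: all finite sums of members of
`U` with nonnegative-integer coefficients. -/
def NsumV {d : ℕ} (U : Set (Fin d → ℤ)) : Set (Fin d → ℤ) :=
  {x | ∃ (l : ℕ) (c : Fin l → ℕ) (u : Fin l → (Fin d → ℤ)),
      (∀ i, u i ∈ U) ∧ x = ∑ i, c i • u i}

/-- The infinity norm `‖u‖_∞ = max_i |u_i|` of a vector `u ∈ ℤ^d`. -/
def linf {d : ℕ} (u : Fin d → ℤ) : ℕ := Finset.univ.sup fun i => (u i).natAbs

/-- The one-norm `‖u‖₁ = Σ_i |u_i|` of a vector `u ∈ ℤ^d`. -/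
def l1 {d : ℕ} (u : Fin d → ℤ) : ℕ := ∑ i, (u i).natAbs

/-!
Among the solutions `c ≤ (a, b)` of `Σ c_u • u = y` take a minimal one, i.e. one admitting no
nonzero `g ≤ c` with `Σ g_u • u = 0`. Passing from `(a, b)` to `c` removes a zero-sum
combination, so it cannot lower the coefficient of a nonreversible `w` (that would put `-w` in
`Σ_ℕ(U)`): the minimal solution still carries all the `b_w`.

A minimal solution is short. With `N = Σ c_u`, the points `x_t = ⌊t c / N⌋`, `0 ≤ t ≤ N`, form
a chain below `c` whose sums `Σ x_t(u) • u` have `j`-th coordinate in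
`[-(y_j⁻ + Σ_u u_j⁺), y_j⁺ + Σ_u u_j⁻]`, and whose lag `t - Σ_u x_t(u)` is less than `|U|`. By
minimality `t ↦ (Σ x_t(u) • u, t - Σ_u x_t(u))` is injective, so `N + 1` is at most
`|U| · ∏_j (|y_j| + Σ_u |u_j| + 1)`, which AM-GM bounds by
`(‖U‖_{1,∞} + ‖y‖_∞ + 2)^(d + |U|)`.
-/

open Finset

theorem prod_le_pow_card_of_sum_le {α : Type*} (s : Finset α) (z : α → ℕ) (M : ℕ)
    (h : ∑ i ∈ s, z i ≤ #s * M) : ∏ i ∈ s, z i ≤ M ^ #s := by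
  rcases s.eq_empty_or_nonempty with rfl | hs
  · simp
  have hcard : (0 : ℝ) < #s := by exact_mod_cast hs.card_pos
  have amgm := Real.geom_mean_le_arith_mean s (fun _ ↦ 1) (fun i ↦ (z i : ℝ))
    (by simp) (by simpa using hcard) (by simp)
  simp only [Real.rpow_one, one_mul, sum_const, nsmul_eq_mul, mul_one] at amgm
  have hmean : (∑ i ∈ s, (z i : ℝ)) / #s ≤ M := by
    rw [div_le_iff₀ hcard, mul_comm]; exact_mod_cast h
  have := pow_le_pow_left₀ (by positivity) (amgm.trans hmean) #s
  rw [← Real.rpow_natCast, ← Real.rpow_mul (by positivity), inv_mul_cancel₀ hcard.ne',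
    Real.rpow_one] at this
  exact_mod_cast this

/- AM-GM for the `card κ` factors `Y + R j + 1` together with `n` factors `2`,
whose product `2 ^ n` dominates `n`. -/
theorem card_mul_prod_le_pow {κ : Type*} [Fintype κ] (n C Y : ℕ) (R : κ → ℕ)
    (hR : ∑ j, R j ≤ n * C) :
    n * ∏ j, (Y + R j + 1) ≤ (C + Y + 2) ^ (Fintype.card κ + n) := by
  let z : κ ⊕ Fin n → ℕ := Sum.elim (fun j ↦ Y + R j + 1) fun _ ↦ 2
  have hz : ∑ i, z i ≤ #(univ : Finset (κ ⊕ Fin n)) * (C + Y + 2) := by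
    simp only [z, Fintype.sum_sum_type, Sum.elim_inl, Sum.elim_inr, sum_add_distrib, sum_const,
      card_univ, Fintype.card_sum, Fintype.card_fin, smul_eq_mul]
    nlinarith
  calc n * ∏ j, (Y + R j + 1) ≤ 2 ^ n * ∏ j, (Y + R j + 1) := by
        gcongr; exact Nat.lt_two_pow_self.le
    _ = ∏ i, z i := by simp [z, Fintype.prod_sum_type, mul_comm]
    _ ≤ (C + Y + 2) ^ (Fintype.card κ + n) := by
        simpa [Fintype.card_sum] using prod_le_pow_card_of_sum_le univ z _ hz

theorem NsumV_eq_span {d : ℕ} (U : Set (Fin d → ℤ)) : NsumV U = Submodule.span ℕ U := by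
  ext x
  rw [SetLike.mem_coe, Submodule.mem_span_set']
  constructor
  · rintro ⟨l, c, u, hu, rfl⟩
    exact ⟨l, c, fun i ↦ ⟨u i, hu i⟩, rfl⟩
  · rintro ⟨l, c, u, rfl⟩
    exact ⟨l, c, fun i ↦ u i, fun i ↦ (u i).2, rfl⟩

section ZeroSumFree

variable {ι M : Type*} [Fintype ι] [AddCommGroup M]

def ZeroSumFree (u : ι → M) (c : ι → ℕ) : Prop :=
  ∀ g ≤ c, ∑ i, g i • u i = 0 → g = 0

theorem sum_tsub_smul {u : ι → M} {c c' : ι → ℕ} (hle : c' ≤ c) :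
    ∑ i, (c - c') i • u i = ∑ i, c i • u i - ∑ i, c' i • u i := by
  rw [← sum_sub_distrib]
  exact sum_congr rfl fun i _ ↦ by rw [Pi.sub_apply, sub_nsmul _ (hle i), sub_eq_add_neg]

theorem exists_zeroSumFree_le (u : ι → M) (c : ι → ℕ) :
    ∃ c' ≤ c, ∑ i, c' i • u i = ∑ i, c i • u i ∧ ZeroSumFree u c' := by
  obtain ⟨c', ⟨hc'c, hc'u⟩, hmin⟩ := wellFounded_lt.has_min
    {c' | c' ≤ c ∧ ∑ i, c' i • u i = ∑ i, c i • u i} ⟨c, le_rfl, rfl⟩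
  refine ⟨c', hc'c, hc'u, fun g hg hgu ↦ ?_⟩
  by_contra hg0
  obtain ⟨i, hi⟩ := Function.ne_iff.mp hg0
  refine hmin (c' - g) ⟨tsub_le_self.trans hc'c, ?_⟩ (lt_of_le_of_ne tsub_le_self fun h ↦ ?_)
  · rw [sum_tsub_smul hg, hgu, sub_zero, hc'u]
  · have hgi : g i ≤ c' i := hg i
    have hgi' := congrFun h i
    simp only [Pi.sub_apply, Pi.zero_apply] at hgi' hi
    omega

theorem neg_mem_span_of_sum_smul_eq_zero {u : ι → M} {g : ι → ℕ} (hg : ∑ i, g i • u i = 0)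
    {i₀ : ι} (hi₀ : g i₀ ≠ 0) : -u i₀ ∈ Submodule.span ℕ (Set.range u) := by
  classical
  have hsplit : -u i₀ = (g i₀ - 1) • u i₀ + ∑ i ∈ univ.erase i₀, g i • u i := by
    rw [← add_sum_erase _ _ (mem_univ i₀), ← Nat.sub_add_cancel (Nat.one_le_iff_ne_zero.mpr hi₀),
      add_nsmul, one_nsmul] at hg
    rw [neg_eq_iff_add_eq_zero, ← hg]
    abel
  rw [hsplit]
  exact add_mem (Submodule.smul_mem _ _ (Submodule.subset_span ⟨i₀, rfl⟩))
    (Submodule.sum_mem _ fun i _ ↦ Submodule.smul_mem _ _ (Submodule.subset_span ⟨i, rfl⟩))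

theorem eq_of_le_of_sum_smul_eq {u : ι → M} {c c₀ : ι → ℕ} (hle : c ≤ c₀)
    (hsum : ∑ i, c i • u i = ∑ i, c₀ i • u i) {i : ι}
    (hi : -u i ∉ Submodule.span ℕ (Set.range u)) : c i = c₀ i := by
  by_contra hne
  refine hi (neg_mem_span_of_sum_smul_eq_zero (g := c₀ - c) ?_ ?_)
  · rw [sum_tsub_smul hle, hsum, sub_self]
  · have hci : c i ≤ c₀ i := hle i
    rw [Pi.sub_apply]
    omega

theorem injOn_Iic_of_zeroSumFree {u : ι → M} {c : ι → ℕ} (hc : ZeroSumFree u c) {N : ℕ}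
    {x : ℕ → ι → ℕ} (hmono : Monotone x) (hxc : ∀ t ≤ N, x t ≤ c) (hx : ∀ t, ∑ i, x t i ≤ t) :
    Set.InjOn (fun t ↦ (∑ i, x t i • u i, t - ∑ i, x t i)) (Set.Iic N) := by
  have hchain : ∀ s t, s ≤ t → t ≤ N → ∑ i, x s i • u i = ∑ i, x t i • u i → x s = x t := by
    intro s t hst htN hsum
    have hg := hc (x t - x s) (tsub_le_self.trans (hxc t htN))
      (by rw [sum_tsub_smul (hmono hst), hsum, sub_self])
    exact le_antisymm (hmono hst) (tsub_eq_zero_iff_le.mp hg)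
  intro s hs t ht hst
  simp only [Prod.mk.injEq] at hst
  have hxs := hx s
  have hxt := hx t
  obtain hle | hle := le_total s t
  · have hxst := hchain s t hle ht hst.1
    rw [hxst] at hst hxs
    omega
  · have hxts := hchain t s hle hs hst.1.symm
    rw [hxts] at hst hxt
    omega

end ZeroSumFree

section FloorChain

variable {ι : Type*} [Fintype ι]

theorem sum_mul_div_sum_le (c : ι → ℕ) (t : ℕ) : ∑ i, t * c i / ∑ j, c j ≤ t := by
  set N := ∑ j, c j
  rcases Nat.eq_zero_or_pos N with hN | hN
  · simp [hN]
  refine Nat.le_of_mul_le_mul_right ?_ hN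
  calc (∑ i, t * c i / N) * N = ∑ i, t * c i / N * N := sum_mul ..
    _ ≤ ∑ i, t * c i := sum_le_sum fun i _ ↦ Nat.div_mul_le_self _ _
    _ = t * N := (mul_sum ..).symm

theorem lt_sum_mul_div_sum_add_card (c : ι → ℕ) (t : ℕ) (hN : 0 < ∑ j, c j) :
    t < ∑ i, t * c i / ∑ j, c j + Fintype.card ι := by
  set N := ∑ j, c j
  obtain ⟨i₀, -, -⟩ := exists_ne_zero_of_sum_ne_zero hN.ne'
  refine Nat.lt_of_mul_lt_mul_right (a := N) ?_
  calc t * N = ∑ i, t * c i := mul_sum ..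
    _ < ∑ i, (t * c i / N * N + N) :=
        sum_lt_sum_of_nonempty ⟨i₀, mem_univ _⟩ fun i _ ↦ Nat.lt_div_mul_add hN
    _ = (∑ i, t * c i / N + Fintype.card ι) * N := by
        simp [sum_add_distrib, sum_mul, add_mul]

theorem mem_Icc_of_mul_eq_sub_sum {N t : ℕ} {y v : ℤ} {r : ι → ℕ} {a : ι → ℤ} (hN : 0 < N)
    (ht : t ≤ N) (hr : ∀ i, r i ≤ N) (h : N * v = t * y - ∑ i, r i * a i) :
    v ∈ Icc (-(y⁻ + ∑ i, (a i)⁺)) (y⁺ + ∑ i, (a i)⁻) := by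
  have ht' : (t : ℤ) ≤ N := by exact_mod_cast ht
  have hy := posPart_sub_negPart y
  have hy₁ := posPart_nonneg y
  have hy₂ := negPart_nonneg y
  have hra : ∀ i, -(N * (a i)⁻) ≤ r i * a i ∧ r i * a i ≤ N * (a i)⁺ := fun i ↦ by
    have ha := posPart_sub_negPart (a i)
    have ha₁ := posPart_nonneg (a i)
    have ha₂ := negPart_nonneg (a i)
    have hri : (r i : ℤ) ≤ N := by exact_mod_cast hr i
    constructor <;> nlinarith
  have hlo : ∑ i, -(N * (a i)⁻) ≤ ∑ i, r i * a i := sum_le_sum fun i _ ↦ (hra i).1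
  have hhi : ∑ i, r i * a i ≤ ∑ i, N * (a i)⁺ := sum_le_sum fun i _ ↦ (hra i).2
  rw [sum_neg_distrib, ← mul_sum] at hlo
  rw [← mul_sum] at hhi
  rw [mem_Icc]
  constructor <;> refine le_of_mul_le_mul_left ?_ (by exact_mod_cast hN : (0 : ℤ) < N) <;>
    nlinarith

theorem card_Icc_negPart_posPart (y : ℤ) (a : ι → ℤ) :
    #(Icc (-(y⁻ + ∑ i, (a i)⁺)) (y⁺ + ∑ i, (a i)⁻)) = y.natAbs + ∑ i, (a i).natAbs + 1 := by
  rw [Int.card_Icc, ← Int.toNat_natCast (y.natAbs + _ + 1)]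
  congr 1
  push_cast
  simp only [← posPart_add_negPart, sum_add_distrib]
  ring

theorem natCast_mul_sum_div_smul_apply {κ : Type*} (c : ι → ℕ) (u : ι → κ → ℤ) (N t : ℕ)
    (j : κ) : (N : ℤ) * (∑ i, (t * c i / N) • u i) j =
      t * (∑ i, c i • u i) j - ∑ i, ((t * c i % N : ℕ) : ℤ) * u i j := by
  simp only [Finset.sum_apply, nsmul_eq_mul, Pi.mul_apply, Pi.natCast_apply, mul_sum,
    ← sum_sub_distrib]
  refine sum_congr rfl fun i _ ↦ ?_
  have hdiv : (N : ℤ) * (t * c i / N : ℕ) + (t * c i % N : ℕ) = t * c i := by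
    exact_mod_cast Nat.div_add_mod (t * c i) N
  linear_combination u i j * hdiv

end FloorChain

theorem sum_le_card_mul_prod_of_zeroSumFree {ι κ : Type*} [Fintype ι] [Fintype κ]
    [DecidableEq κ] {u : ι → κ → ℤ} {c : ι → ℕ} (hc : ZeroSumFree u c) :
    ∑ i, c i ≤ Fintype.card ι *
      ∏ j, (((∑ i, c i • u i) j).natAbs + ∑ i, (u i j).natAbs + 1) := by
  set N := ∑ i, c i
  set y := ∑ i, c i • u i
  rcases Nat.eq_zero_or_pos N with hN | hN
  · simp [hN]
  let x : ℕ → ι → ℕ := fun t i ↦ t * c i / N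
  let box : Finset (κ → ℤ) :=
    Icc (fun j ↦ -((y j)⁻ + ∑ i, (u i j)⁺)) (fun j ↦ (y j)⁺ + ∑ i, (u i j)⁻)
  have hmaps : Set.MapsTo (fun t ↦ (∑ i, x t i • u i, t - ∑ i, x t i)) ↑(Iic N)
      ↑(box ×ˢ range (Fintype.card ι)) := by
    intro t ht
    rw [coe_Iic, Set.mem_Iic] at ht
    have hcoord (j : κ) := mem_Icc_of_mul_eq_sub_sum (v := (∑ i, x t i • u i) j) (y := y j)
      (a := fun i ↦ u i j) hN ht (fun i ↦ (Nat.mod_lt (t * c i) hN).le)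
      (natCast_mul_sum_div_smul_apply c u N t j)
    simp only [coe_product, Set.mem_prod, mem_coe, mem_range, box, mem_Icc]
    refine ⟨⟨fun j ↦ (mem_Icc.mp (hcoord j)).1, fun j ↦ (mem_Icc.mp (hcoord j)).2⟩, ?_⟩
    have hle : ∑ i, x t i ≤ t := sum_mul_div_sum_le c t
    have hlt : t < ∑ i, x t i + Fintype.card ι := lt_sum_mul_div_sum_add_card c t hN
    omega
  have hinj : Set.InjOn (fun t ↦ (∑ i, x t i • u i, t - ∑ i, x t i)) ↑(Iic N) := by
    rw [coe_Iic]
    refine injOn_Iic_of_zeroSumFree hc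
      (fun s t hst i ↦ Nat.div_le_div_right (Nat.mul_le_mul_right _ hst))
      (fun t ht i ↦ ?_) (sum_mul_div_sum_le c)
    calc t * c i / N ≤ N * c i / N := Nat.div_le_div_right (Nat.mul_le_mul_right _ ht)
      _ = c i := Nat.mul_div_cancel_left _ hN
  have hcard := card_le_card_of_injOn _ hmaps hinj
  rw [Nat.card_Iic, card_product, card_range, Pi.card_Icc] at hcard
  simp only [card_Icc_negPart_posPart] at hcard
  exact (Nat.le_succ N).trans (hcard.trans_eq (mul_comm _ _))

theorem sum_le_pow_of_zeroSumFree {ι κ : Type*} [Fintype ι] [Fintype κ] [DecidableEq κ]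
    {u : ι → κ → ℤ} {c : ι → ℕ} (hc : ZeroSumFree u c) {C Y : ℕ}
    (hC : ∀ i, ∑ j, (u i j).natAbs ≤ C) (hY : ∀ j, ((∑ i, c i • u i) j).natAbs ≤ Y) :
    ∑ i, c i ≤ (C + Y + 2) ^ (Fintype.card κ + Fintype.card ι) := by
  calc ∑ i, c i
      ≤ Fintype.card ι * ∏ j, (((∑ i, c i • u i) j).natAbs + ∑ i, (u i j).natAbs + 1) :=
        sum_le_card_mul_prod_of_zeroSumFree hc
    _ ≤ Fintype.card ι * ∏ j, (Y + ∑ i, (u i j).natAbs + 1) := by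
        gcongr with j
        exact hY j
    _ ≤ (C + Y + 2) ^ (Fintype.card κ + Fintype.card ι) := by
        refine card_mul_prod_le_pow _ C Y _ ?_
        rw [sum_comm, ← card_univ]
        exact sum_le_card_nsmul _ _ _ fun i _ ↦ hC i

theorem bound_nonreversible_general
    (d : ℕ)
    (U₁ U₂ : Finset (Fin d → ℤ))
    (hnonrev : ∀ w ∈ U₂, ¬ (-w ∈ NsumV ((↑(U₁ ∪ U₂) : Set (Fin d → ℤ)))))
    (y : Fin d → ℤ) (a b : (Fin d → ℤ) → ℕ)
    (hsol : y = ∑ v ∈ U₁, a v • v + ∑ w ∈ U₂, b w • w) :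
    ∑ w ∈ U₂, b w ≤
      U₂.card * ((U₁ ∪ U₂).sup l1 + linf y + 2) ^ (d + (U₁ ∪ U₂).card) := by
  classical
  obtain rfl | hU₂ := U₂.eq_empty_or_nonempty
  · simp
  set V := U₁ ∪ U₂
  let c₀ : V → ℕ := fun w ↦ (if ↑w ∈ U₁ then a w else 0) + (if ↑w ∈ U₂ then b w else 0)
  have hc₀ : ∑ w : V, c₀ w • (w : Fin d → ℤ) = y := by
    rw [hsol, sum_coe_sort V fun w ↦
      ((if w ∈ U₁ then a w else 0) + (if w ∈ U₂ then b w else 0)) • w]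
    simp only [add_smul, ite_smul, zero_smul, sum_add_distrib, sum_ite_mem, V,
      inter_eq_right.mpr subset_union_left, inter_eq_right.mpr subset_union_right]
  obtain ⟨c, hcc₀, hc, hfree⟩ := exists_zeroSumFree_le (Subtype.val : V → Fin d → ℤ) c₀
  have hb (w : V) (hw : ↑w ∈ U₂) : b w ≤ c w := by
    rw [eq_of_le_of_sum_smul_eq hcc₀ hc (i := w)
      (by rw [Subtype.range_coe, ← SetLike.mem_coe, ← NsumV_eq_span]; exact hnonrev w hw)]
    simp [c₀, hw]
  have hY (j : Fin d) : ((∑ w : V, c w • (w : Fin d → ℤ)) j).natAbs ≤ linf y := by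
    rw [hc, hc₀]
    exact le_sup (f := fun i ↦ (y i).natAbs) (mem_univ j)
  calc ∑ w ∈ U₂, b w = ∑ w : V, if ↑w ∈ U₂ then b w else 0 := by
        rw [sum_coe_sort V fun w ↦ if w ∈ U₂ then b w else 0, sum_ite_mem,
          inter_eq_right.mpr subset_union_right]
    _ ≤ ∑ w : V, c w := sum_le_sum fun w _ ↦ by split_ifs with hw; exacts [hb w hw, Nat.zero_le _]
    _ ≤ (V.sup l1 + linf y + 2) ^ (d + V.card) := by
        simpa using sum_le_pow_of_zeroSumFree hfree (fun w ↦ le_sup (f := l1) w.2) hY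
    _ ≤ U₂.card * (V.sup l1 + linf y + 2) ^ (d + V.card) :=
        Nat.le_mul_of_pos_left _ hU₂.card_pos

/-- **Lemma (bound on the use of nonreversible vectors).**
Let `U₁, U₂` be two finite sets of vectors in `ℤ^d` such that every vector in
`U₂` is nonreversible in `U = U₁ ∪ U₂` (i.e. `−w ∉ Σ_ℕ(U)` for `w ∈ U₂`).
For any solution `y = Σ_{v ∈ U₁} a_v·v + Σ_{w ∈ U₂} b_w·w` with coefficients
`a_v, b_w ∈ ℕ`, we have
`Σ_{w ∈ U₂} b_w ≤ |U₂| · (‖U‖_{1,∞} + ‖y‖_∞ + 2)^(d + |U|)`. -/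
theorem bound_nonreversible
    (d : ℕ) (hd : 1 ≤ d)
    (U₁ U₂ : Finset (Fin d → ℤ))
    (hnonrev : ∀ w ∈ U₂, ¬ (-w ∈ NsumV ((↑(U₁ ∪ U₂) : Set (Fin d → ℤ)))))
    (y : Fin d → ℤ) (a b : (Fin d → ℤ) → ℕ)
    (hsol : y = ∑ v ∈ U₁, a v • v + ∑ w ∈ U₂, b w • w) :
    ∑ w ∈ U₂, b w ≤
      U₂.card * ((U₁ ∪ U₂).sup l1 + linf y + 2) ^ (d + (U₁ ∪ U₂).card) :=
  bound_nonreversible_general d U₁ U₂ hnonrev y a b hsol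
end
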